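/- Let R be a commutative ring and r ∈ R. The extended Rees algebra R[t,u]/(tu − r) (graded with deg t = 1, deg u = −1), after inverting u and taking the degree-zero part, yields an R-algebra B such that the localization map R[1/r] → B[1/r] is an isomorphism. -/

import Mathlib

universe u

open MvPolynomial

/-!
The structure map `R → B` is already an isomorphism, so inverting `r` on both sides gives the
claim. Injectivity: if `u ^ m * x = 0` in `A`, then `X₁ ^ m * x` is a multiple of `X₀ X₁ - r`;
evaluating at `(r, 1)` gives `x = 0`. Surjectivity: an element of `B` is `a / u ^ n` with `a` of
degree `-n`, and the degree `-n` part of `A` is spanned by the monomials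
`t ^ i * u ^ (i + n) = r ^ i * u ^ n`, so `a = s * u ^ n` with `s ∈ R`.
-/

theorem DirectSum.coe_decompose_sum_of_mem {ι σ M α : Type*} [DecidableEq ι] [AddCommMonoid M]
    [SetLike σ M] [AddSubmonoidClass σ M] (ℳ : ι → σ) [DirectSum.Decomposition ℳ]
    (s : Finset α) (g : α → M) (d : α → ι) (hg : ∀ a ∈ s, g a ∈ ℳ (d a)) (i : ι) :
    (DirectSum.decompose ℳ (∑ a ∈ s, g a) i : M) = ∑ a ∈ s with d a = i, g a := by
  rw [DirectSum.decompose_sum, DFinsupp.finsetSum_apply, AddSubmonoidClass.coe_finsetSum,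
    Finset.sum_filter]
  refine Finset.sum_congr rfl fun a ha => ?_
  split_ifs with hdi
  · exact DirectSum.decompose_of_mem_same ℳ (hdi ▸ hg a ha)
  · exact DirectSum.decompose_of_mem_ne ℳ (hg a ha) hdi

section Rees

variable {R A : Type*} [CommRing R] [CommRing A] [Algebra R A] {t u : A}

theorem aeval_monomial_fin_two (m : Fin 2 →₀ ℕ) (c : R) :
    aeval ![t, u] (monomial m c) = algebraMap R A c * (t ^ m 0 * u ^ m 1) := by
  rw [aeval_monomial, Finsupp.prod_fintype _ _ fun _ => pow_zero _, Fin.prod_univ_two]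
  rfl

theorem injective_algebraMap_localization_powers {r : R}
    (hker : RingHom.ker (aeval ![t, u] : MvPolynomial (Fin 2) R →ₐ[R] A).toRingHom =
      Ideal.span {(X 0 * X 1 - C r : MvPolynomial (Fin 2) R)}) :
    Function.Injective ((algebraMap A (Localization.Away u)).comp (algebraMap R A)) := by
  refine (injective_iff_map_eq_zero _).mpr fun x hx => ?_
  obtain ⟨⟨_, m, rfl⟩, hm⟩ := (IsLocalization.map_eq_zero_iff (Submonoid.powers u) _ _).mp hx
  have hmem : (X 1 ^ m * C x : MvPolynomial (Fin 2) R) ∈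
      RingHom.ker (aeval ![t, u] : MvPolynomial (Fin 2) R →ₐ[R] A).toRingHom := by
    simpa using hm
  rw [hker, Ideal.mem_span_singleton] at hmem
  obtain ⟨q, hq⟩ := hmem
  simpa using congrArg (aeval ![r, 1]) hq

section Graded

variable (𝒜 : ℤ → Submodule R A) [GradedAlgebra 𝒜]

theorem aeval_monomial_mem_graded (ht : t ∈ 𝒜 1) (hu : u ∈ 𝒜 (-1)) (m : Fin 2 →₀ ℕ) (c : R) :
    aeval ![t, u] (monomial m c) ∈ 𝒜 (m 0 - m 1) := by
  rw [aeval_monomial_fin_two, sub_eq_add_neg, ← zero_add ((m 0 : ℤ) + _)]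
  refine SetLike.mul_mem_graded (SetLike.algebraMap_mem_graded 𝒜 c)
    (SetLike.mul_mem_graded ?_ ?_)
  · simpa using SetLike.pow_mem_graded (m 0) ht
  · simpa using SetLike.pow_mem_graded (m 1) hu

theorem exists_eq_algebraMap_mul_pow_of_mem_neg {r : R} (ht : t ∈ 𝒜 1) (hu : u ∈ 𝒜 (-1))
    (htu : t * u = algebraMap R A r)
    (hsurj : Function.Surjective (aeval ![t, u] : MvPolynomial (Fin 2) R →ₐ[R] A))
    {n : ℕ} {a : A} (ha : a ∈ 𝒜 (-n)) :
    ∃ s : R, a = algebraMap R A s * u ^ n := by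
  classical
  obtain ⟨p, rfl⟩ := hsurj a
  refine ⟨∑ m ∈ p.support with (m 0 : ℤ) - m 1 = -n, coeff m p * r ^ m 0, ?_⟩
  conv_lhs => rw [← DirectSum.decompose_of_mem_same 𝒜 ha, p.as_sum, map_sum,
    DirectSum.coe_decompose_sum_of_mem 𝒜 _ _ _
      fun m _ => aeval_monomial_mem_graded 𝒜 ht hu m (coeff m p)]
  rw [map_sum, Finset.sum_mul]
  refine Finset.sum_congr rfl fun m hm => ?_
  have hm1 : m 1 = m 0 + n := by have := (Finset.mem_filter.mp hm).2; omega
  rw [aeval_monomial_fin_two, hm1, pow_add, ← mul_assoc (t ^ m 0), ← mul_pow, htu, map_mul,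
    map_pow, mul_assoc]

theorem surjective_of_mem_neg_eq_algebraMap_mul_pow (hu : u ∈ 𝒜 (-1))
    (hdeg : ∀ (n : ℕ) (a : A), a ∈ 𝒜 (-n) → ∃ s : R, a = algebraMap R A s * u ^ n)
    (f : R →+* HomogeneousLocalization 𝒜 (Submonoid.powers u))
    (hf : ∀ x : R, (f x).val =
      algebraMap A (Localization (Submonoid.powers u)) (algebraMap R A x)) :
    Function.Surjective f := by
  intro b
  obtain ⟨n, a, ha, rfl⟩ := HomogeneousLocalization.Away.mk_surjective 𝒜 hu b
  obtain ⟨s, rfl⟩ := hdeg n a (by simpa using ha)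
  refine ⟨s, HomogeneousLocalization.val_injective _ ?_⟩
  rw [hf, HomogeneousLocalization.Away.val_mk, Localization.mk_eq_mk',
    IsLocalization.eq_mk'_iff_mul_eq, ← map_mul]

end Graded

end Rees

/-- Let `A = R[t,u]/(tu − r)` with its ℤ-grading (`deg t = 1`, `deg u = −1`), presented as
an `R`-algebra `A` generated by homogeneous elements `t, u` with `tu = r`, with the
presentation ideal exactly `(tu − r)`. Let `B` be the degree-zero part of `A[u⁻¹]`, i.e.
the homogeneous localization of `A` at the powers of `u`. Then `R[1/r] → B[1/r]` is an
isomorphism: `B[1/(image of r)]` is a localization of `R` away from `r`. -/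
theorem stmt_3 (R : Type u) [CommRing R] (r : R)
    (A : Type u) [CommRing A] [Algebra R A]
    (𝒜 : ℤ → Submodule R A) [GradedAlgebra 𝒜]
    (t u : A) (ht : t ∈ 𝒜 1) (hu : u ∈ 𝒜 (-1))
    (htu : t * u = algebraMap R A r)
    (hsurj : Function.Surjective (aeval (R := R) ![t, u] :
      MvPolynomial (Fin 2) R →ₐ[R] A))
    (hker : RingHom.ker (aeval (R := R) ![t, u] : MvPolynomial (Fin 2) R →ₐ[R] A).toRingHom =
      Ideal.span {(X 0 * X 1 - C r : MvPolynomial (Fin 2) R)})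
    (f : R →+* HomogeneousLocalization 𝒜 (Submonoid.powers u))
    (hf : ∀ x : R, (f x).val =
      algebraMap A (Localization (Submonoid.powers u)) (algebraMap R A x)) :
    @IsLocalization.Away R _ r (Localization.Away (f r)) _
      (((algebraMap (HomogeneousLocalization 𝒜 (Submonoid.powers u))
        (Localization.Away (f r))).comp f).toAlgebra) := by
  have hinj : Function.Injective f := fun x y hxy =>
    injective_algebraMap_localization_powers hker <| by
      simpa only [RingHom.comp_apply, hf] using congrArg HomogeneousLocalization.val hxy
  have hbij : Function.Bijective f := ⟨hinj, surjective_of_mem_neg_eq_algebraMap_mul_pow 𝒜 hu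
    (fun _ _ => exists_eq_algebraMap_mul_pow_of_mem_neg 𝒜 ht hu htu hsurj) f hf⟩
  let := ((algebraMap (HomogeneousLocalization 𝒜 (Submonoid.powers u))
    (Localization.Away (f r))).comp f).toAlgebra
  exact IsLocalization.of_ringEquiv_left (RingEquiv.ofBijective f hbij)
    (M₁ := Submonoid.powers (f r)) (Submonoid.map_powers _ r) fun _ => rfl
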